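/- Let g₁, g₂, g₃, … be functions ℕ → ℕ such that each g_i is primitive recursive and every primitive recursive function ℕ → ℕ equals g_i for some i ≥ 1. For n ≥ 1 define f_n : ℕ → ℕ by f_n(x) = Σ_{i=1}^{n} Σ_{j=1}^{x} g_i(j), and define F : ℕ → ℕ by F(n) = n! · (f_n(100n + 14500) + 1). Then: (a) each f_n is nondecreasing and satisfies g_n(x) ≤ f_n(x) for all x ≥ 1; and (b) there is no primitive recursive function h : ℕ → ℕ such that F(n) ≤ h(100n + 14500) for all n ≥ 1. -/

import Mathlib

/-!
A diagonal argument: a primitive recursive bound `h` would be some `g i` with `i ≥ 1`, and then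
`h (100 i + 14500) = g i (100 i + 14500) ≤ f_i (100 i + 14500) < F i`.
-/

open Finset

section DoubleSum

variable {M : Type*} [AddCommMonoid M] [PartialOrder M] [CanonicallyOrderedAdd M]

theorem monotone_sum_sum_Icc (s : Finset ℕ) (g : ℕ → ℕ → M) :
    Monotone fun x => ∑ i ∈ s, ∑ j ∈ Icc 1 x, g i j := fun _ _ hxy =>
  sum_le_sum fun _ _ => sum_le_sum_of_subset (Icc_subset_Icc_right hxy)

theorem le_sum_sum_Icc (g : ℕ → ℕ → M) {n x : ℕ} (hn : 1 ≤ n) (hx : 1 ≤ x) :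
    g n x ≤ ∑ i ∈ Icc 1 n, ∑ j ∈ Icc 1 x, g i j :=
  calc g n x ≤ ∑ j ∈ Icc 1 x, g n j :=
        single_le_sum (fun _ _ => zero_le) (right_mem_Icc.mpr hx)
    _ ≤ ∑ i ∈ Icc 1 n, ∑ j ∈ Icc 1 x, g i j :=
        single_le_sum (f := fun i => ∑ j ∈ Icc 1 x, g i j) (fun _ _ => zero_le)
          (right_mem_Icc.mpr hn)

end DoubleSum

theorem not_exists_primrec_bound_of_diagonal_lt {g : ℕ → ℕ → ℕ}
    (huniv : ∀ h : ℕ → ℕ, Nat.Primrec h → ∃ i, 1 ≤ i ∧ g i = h) {F k : ℕ → ℕ}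
    (hF : ∀ n, 1 ≤ n → g n (k n) < F n) :
    ¬ ∃ h : ℕ → ℕ, Nat.Primrec h ∧ ∀ n, 1 ≤ n → F n ≤ h (k n) := by
  rintro ⟨h, hh, hbound⟩
  obtain ⟨i, hi, rfl⟩ := huniv h hh
  exact (hF i hi).not_ge (hbound i hi)

theorem lt_factorial_mul_succ (n a : ℕ) : a < n.factorial * (a + 1) :=
  Nat.lt_of_succ_le (Nat.le_mul_of_pos_left _ n.factorial_pos)

theorem no_primrec_bound_for_F (g : ℕ → ℕ → ℕ)
    (huniv : ∀ h : ℕ → ℕ, Nat.Primrec h → ∃ i, 1 ≤ i ∧ g i = h) :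
    (∀ n, 1 ≤ n →
      Monotone (fun x : ℕ => ∑ i ∈ Finset.Icc 1 n, ∑ j ∈ Finset.Icc 1 x, g i j) ∧
      ∀ x, 1 ≤ x → g n x ≤ ∑ i ∈ Finset.Icc 1 n, ∑ j ∈ Finset.Icc 1 x, g i j) ∧
    ¬ ∃ h : ℕ → ℕ, Nat.Primrec h ∧ ∀ n, 1 ≤ n →
        n.factorial * ((∑ i ∈ Finset.Icc 1 n, ∑ j ∈ Finset.Icc 1 (100 * n + 14500), g i j) + 1)
          ≤ h (100 * n + 14500) :=
  ⟨fun _ hn => ⟨monotone_sum_sum_Icc _ g, fun _ hx => le_sum_sum_Icc g hn hx⟩,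
    not_exists_primrec_bound_of_diagonal_lt huniv fun n hn =>
      (le_sum_sum_Icc g hn (by omega)).trans_lt (lt_factorial_mul_succ n _)⟩
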